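/- arXiv:2408.11598 — 6 statements merged into one kernel-verified Lean document; each statement's English description precedes it below -/
import Mathlib

section
/- For every γ ≥ 0, the binary focal loss on the positive class, p ↦ -(1-p)^γ · log(p), is convex on the open interval (0,1). -/
open Real

theorem binary_focal_loss_convex (γ : ℝ) (hγ : 0 ≤ γ) :
    ConvexOn ℝ (Set.Ioo (0:ℝ) 1) (fun p : ℝ => -((1 - p) ^ γ * Real.log p)) := by
  set f : ℝ → ℝ := fun p => -((1 - p) ^ γ * Real.log p) with hfdef
  set F' : ℝ → ℝ := fun p =>
    -(γ * (1 - p) ^ (γ - 1) * (-1) * Real.log p + (1 - p) ^ γ * p⁻¹) with hF'def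
  set G : ℝ → ℝ := fun p =>
    -(γ * ((γ - 1) * (1 - p) ^ (γ - 1 - 1) * (-1)) * (-1) * Real.log p
      + γ * (1 - p) ^ (γ - 1) * (-1) * p⁻¹
      + (γ * (1 - p) ^ (γ - 1) * (-1) * p⁻¹ + (1 - p) ^ γ * (-(p ^ 2)⁻¹))) with hGdef
  have hd : ∀ x ∈ Set.Ioo (0:ℝ) 1, HasDerivAt f (F' x) x := by
    intro x hx
    have hx0 : (0:ℝ) < x := hx.1
    have hx1 : 0 < 1 - x := by linarith [hx.2]
    have h1 : HasDerivAt (fun p : ℝ => 1 - p) (-1) x := by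
      simpa using (hasDerivAt_id x).const_sub 1
    have h2 : HasDerivAt (fun p : ℝ => (1 - p) ^ γ) (γ * (1 - x) ^ (γ - 1) * (-1)) x := by
      have := h1.rpow_const (Or.inl hx1.ne') (p := γ)
      convert this using 1; ring
    have h3 : HasDerivAt Real.log x⁻¹ x := Real.hasDerivAt_log hx0.ne'
    exact (h2.mul h3).neg
  have hd2 : ∀ x ∈ Set.Ioo (0:ℝ) 1, HasDerivAt F' (G x) x := by
    intro x hx
    have hx0 : (0:ℝ) < x := hx.1
    have hx1 : 0 < 1 - x := by linarith [hx.2]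
    have h1 : HasDerivAt (fun p : ℝ => 1 - p) (-1) x := by
      simpa using (hasDerivAt_id x).const_sub 1
    have h2 : HasDerivAt (fun p : ℝ => (1 - p) ^ γ) (γ * (1 - x) ^ (γ - 1) * (-1)) x := by
      have := h1.rpow_const (Or.inl hx1.ne') (p := γ)
      convert this using 1; ring
    have h4 : HasDerivAt (fun p : ℝ => (1 - p) ^ (γ - 1)) ((γ - 1) * (1 - x) ^ (γ - 1 - 1) * (-1)) x := by
      have := h1.rpow_const (Or.inl hx1.ne') (p := γ - 1)
      convert this using 1; ring
    have hA : HasDerivAt (fun p : ℝ => γ * (1 - p) ^ (γ - 1) * (-1))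
        (γ * ((γ - 1) * (1 - x) ^ (γ - 1 - 1) * (-1)) * (-1)) x :=
      (h4.const_mul γ).mul_const (-1)
    have h3 : HasDerivAt Real.log x⁻¹ x := Real.hasDerivAt_log hx0.ne'
    have hInv : HasDerivAt (fun p : ℝ => p⁻¹) (-(x ^ 2)⁻¹) x := hasDerivAt_inv hx0.ne'
    exact ((hA.mul h3).add (h2.mul hInv)).neg
  have hnn : ∀ x ∈ Set.Ioo (0:ℝ) 1, 0 ≤ G x := by
    intro x hx
    have hx0 : (0:ℝ) < x := hx.1
    have hx1 : 0 < 1 - x := by linarith [hx.2]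
    have e1 : (1 - x) ^ (γ - 1) = (1 - x) ^ (γ - 1 - 1) * (1 - x) := by
      rw [← Real.rpow_add_one hx1.ne']; norm_num
    have e2 : (1 - x) ^ γ = (1 - x) ^ (γ - 1 - 1) * (1 - x) ^ 2 := by
      rw [sq, ← mul_assoc, ← Real.rpow_add_one hx1.ne', ← Real.rpow_add_one hx1.ne']; norm_num
    set a : ℝ := (1 - x) ^ (γ - 1 - 1) with hadef
    have ha : 0 ≤ a := Real.rpow_nonneg hx1.le _
    set t : ℝ := -Real.log x with htdef
    have ht : 0 ≤ t := by
      rw [htdef]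
      have := Real.log_nonpos hx0.le (by linarith [hx.2] : x ≤ 1)
      linarith
    have hts : x * t ≤ 1 - x := by
      have h := Real.log_le_sub_one_of_pos (show (0:ℝ) < 1/x by positivity)
      rw [Real.log_div one_ne_zero hx0.ne', Real.log_one] at h
      have : t ≤ 1/x - 1 := by rw [htdef]; linarith
      calc x * t ≤ x * (1/x - 1) := by nlinarith
        _ = 1 - x := by field_simp
    have hG : G x = (γ * (γ - 1) * a * t * x ^ 2 + 2 * γ * a * (1 - x) * x + a * (1 - x) ^ 2) / x ^ 2 := by
      rw [hGdef]
      simp only [e1, e2]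
      have : Real.log x = -t := by rw [htdef]; ring
      rw [this]
      field_simp
      ring
    rw [hG]
    apply div_nonneg _ (by positivity)
    rcases le_or_gt 1 γ with hγ1 | hγ1
    · have h1 : 0 ≤ γ * (γ - 1) * a * t * x ^ 2 := by
        apply mul_nonneg
        apply mul_nonneg
        apply mul_nonneg
        · nlinarith
        · exact ha
        · exact ht
        · positivity
      nlinarith [mul_nonneg (mul_nonneg (mul_nonneg hγ ha) hx1.le) hx0.le,
        mul_nonneg ha (sq_nonneg (1 - x))]
    · nlinarith [mul_nonneg (mul_nonneg (mul_nonneg hγ (by linarith : (0:ℝ) ≤ 1 - γ)) ha)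
        (by nlinarith : 0 ≤ x * ((1 - x) - x * t)),
        mul_nonneg (mul_nonneg hγ ha) (mul_pos hx0 hx1).le]
  have hmem : ∀ x ∈ Set.Ioo (0:ℝ) 1, deriv f =ᶠ[nhds x] F' := by
    intro x hx
    filter_upwards [isOpen_Ioo.mem_nhds hx] with y hy
    exact (hd y hy).deriv
  apply convexOn_of_deriv2_nonneg' (convex_Ioo 0 1)
  · intro x hx
    exact (hd x hx).differentiableAt.differentiableWithinAt
  · intro x hx
    have := ((hmem x hx).differentiableAt_iff).mpr (hd2 x hx).differentiableAt
    exact this.differentiableWithinAt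
  · intro x hx
    have h2 : deriv (deriv f) x = deriv F' x := (hmem x hx).deriv_eq
    have : deriv^[2] f x = G x := by
      simp only [Function.iterate_succ, Function.iterate_zero, Function.comp_apply, id]
      rw [h2, (hd2 x hx).deriv]
    rw [this]
    exact hnn x hx
end

section
/- For every γ ≥ 0 and every p ∈ (0,1), the quadratic (in γ) expression γ²·(-log(p)·(1-p)^{γ-2}) + γ·(2(1-p)^{γ-1}/p + (1-p)^{γ-2}·log(p)) + (1-p)^γ/p² is nonnegative. -/
open Real

theorem focal_second_derivative_quadratic_nonneg (γ : ℝ) (hγ : 0 ≤ γ)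
    (p : ℝ) (hp : p ∈ Set.Ioo (0:ℝ) 1) :
    0 ≤ γ ^ 2 * (-Real.log p * (1 - p) ^ (γ - 2)) +
        γ * (2 * (1 - p) ^ (γ - 1) / p + (1 - p) ^ (γ - 2) * Real.log p) +
        (1 - p) ^ γ / p ^ 2 := by
  obtain ⟨hp0, hp1⟩ := hp
  have hq : (0:ℝ) < 1 - p := by linarith
  have hA : (0:ℝ) < (1 - p) ^ (γ - 2) := Real.rpow_pos_of_pos hq _
  have e1 : (1 - p) ^ (γ - 1) = (1 - p) ^ (γ - 2) * (1 - p) := by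
    rw [← Real.rpow_add_one hq.ne' (γ - 2)]; ring_nf
  have e2 : (1 - p) ^ γ = (1 - p) ^ (γ - 2) * (1 - p) ^ (2:ℕ) := by
    rw [← Real.rpow_natCast (1 - p) 2, ← Real.rpow_add hq]; ring_nf
  -- key inequality: -log p ≤ (1-p)/p
  have hL0 : 0 ≤ -Real.log p := by
    have := Real.log_nonpos (le_of_lt hp0) (le_of_lt hp1)
    linarith
  have hLle : -Real.log p ≤ (1 - p) / p := by
    have h := Real.log_le_sub_one_of_pos (show (0:ℝ) < 1/p by positivity)
    rw [Real.log_div one_ne_zero hp0.ne', Real.log_one] at h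
    rw [div_sub' hp0.ne', mul_one] at h
    linarith [h]
  set L := -Real.log p with hLdef
  have inner : 0 ≤ γ ^ 2 * L + γ * (2 * ((1 - p) / p) - L) + ((1 - p) / p) ^ 2 := by
    set r := (1 - p) / p with hr
    have hr0 : 0 < r := by positivity
    rcases le_total γ 1 with h1 | h1
    · nlinarith [mul_nonneg (mul_nonneg hγ (by linarith : 0 ≤ 1 - γ)) (by linarith : 0 ≤ r - L)]
    · nlinarith [mul_nonneg (mul_nonneg hγ (by linarith : 0 ≤ γ - 1)) hL0]
  have expand : γ ^ 2 * (-Real.log p * (1 - p) ^ (γ - 2)) +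
        γ * (2 * (1 - p) ^ (γ - 1) / p + (1 - p) ^ (γ - 2) * Real.log p) +
        (1 - p) ^ γ / p ^ 2 =
      (1 - p) ^ (γ - 2) * (γ ^ 2 * L + γ * (2 * ((1 - p) / p) - L) + ((1 - p) / p) ^ 2) := by
    rw [e1, e2, hLdef]
    field_simp
    ring
  rw [expand]
  exact mul_nonneg hA.le inner
end

section
/- For every γ > 0, the binary focal calibration map p̂(q) = 1 / (1 + ((1-q)/q)^γ · ((1-q) - γ·q·log(q)) / (q - γ·(1-q)·log(1-q))), extended by p̂(0)=0 and p̂(1)=1, is a strictly monotonically increasing bijection from [0,1] to [0,1]. -/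
open Real

/-- The binary focal calibration map with parameter `γ`, extended by `p̂ 0 = 0`, `p̂ 1 = 1`. -/
noncomputable def focalCalib (γ : ℝ) (q : ℝ) : ℝ :=
  if q = 0 then 0
  else if q = 1 then 1
  else 1 / (1 + ((1 - q) / q) ^ γ *
      (((1 - q) - γ * q * Real.log q) / (q - γ * (1 - q) * Real.log (1 - q))))

open Filter Topology Set

noncomputable def fcA (γ q : ℝ) : ℝ := (1 - q) - γ * q * Real.log q

noncomputable def fcG (γ q : ℝ) : ℝ :=
  γ * Real.log (1 - q) - γ * Real.log q + Real.log (fcA γ q) - Real.log (fcA γ (1 - q))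

lemma fcA_pos {γ q : ℝ} (hγ : 0 < γ) (h0 : 0 < q) (h1 : q < 1) : 0 < fcA γ q := by
  have hlog : Real.log q < 0 := Real.log_neg h0 h1
  have : γ * q * Real.log q < 0 := mul_neg_of_pos_of_neg (mul_pos hγ h0) hlog
  unfold fcA; linarith

lemma fcA_hasDerivAt (γ : ℝ) {q : ℝ} (h0 : q ≠ 0) :
    HasDerivAt (fcA γ) (-(1 + γ) - γ * Real.log q) q := by
  have h1 : HasDerivAt (fun q : ℝ => (1 : ℝ) - q) (-1) q := by
    simpa using (hasDerivAt_const q (1:ℝ)).fun_sub (hasDerivAt_id q)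
  have h2 : HasDerivAt (fun q : ℝ => γ * (q * Real.log q)) (γ * (Real.log q + 1)) q :=
    (Real.hasDerivAt_mul_log h0).const_mul γ
  have h3 : HasDerivAt (fcA γ) (-1 - γ * (Real.log q + 1)) q := by
    unfold fcA
    simpa [mul_assoc] using h1.fun_sub h2
  convert h3 using 1
  ring

lemma fc_key {γ q : ℝ} (hγ : 0 < γ) (h0 : 0 < q) (h1 : q < 1) :
    q * (-(1 + γ) - γ * Real.log q) < γ * fcA γ q := by
  have hL : q * Real.log q < 0 := mul_neg_of_pos_of_neg h0 (Real.log_neg h0 h1)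
  have hL2 : q - 1 ≤ q * Real.log q := by
    have := Real.one_sub_inv_le_log_of_pos h0
    have h := mul_le_mul_of_nonneg_left this h0.le
    have hq : q * (1 - q⁻¹) = q - 1 := by field_simp
    linarith [hq ▸ h]
  unfold fcA
  rcases le_or_gt 1 γ with hγ1 | hγ1
  · nlinarith [mul_nonneg (mul_nonneg hγ.le (sub_nonneg.2 hγ1)) (neg_nonneg.2 hL.le)]
  · nlinarith [mul_pos hγ (sub_pos.2 hγ1), mul_nonneg (mul_pos hγ (sub_pos.2 hγ1)).le (sub_nonneg.2 h1.le)]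

lemma fcG_hasDerivAt {γ q : ℝ} (hγ : 0 < γ) (h0 : 0 < q) (h1 : q < 1) :
    HasDerivAt (fcG γ)
      (γ * (-(1 - q)⁻¹) - γ * q⁻¹ + (fcA γ q)⁻¹ * (-(1 + γ) - γ * Real.log q)
        + (fcA γ (1 - q))⁻¹ * (-(1 + γ) - γ * Real.log (1 - q))) q := by
  have h1q : (0:ℝ) < 1 - q := by linarith
  have hone : HasDerivAt (fun q : ℝ => 1 - q) (-1) q := by
    simpa using (hasDerivAt_const q (1:ℝ)).fun_sub (hasDerivAt_id q)
  have hlog1 : HasDerivAt (fun q : ℝ => Real.log (1 - q)) ((1 - q)⁻¹ * (-1)) q :=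
    (Real.hasDerivAt_log h1q.ne').comp q hone
  have hlogq : HasDerivAt Real.log q⁻¹ q := Real.hasDerivAt_log h0.ne'
  have hlogA : HasDerivAt (fun q : ℝ => Real.log (fcA γ q))
      ((fcA γ q)⁻¹ * (-(1 + γ) - γ * Real.log q)) q :=
    (Real.hasDerivAt_log (fcA_pos hγ h0 h1).ne').comp q (fcA_hasDerivAt γ h0.ne')
  have hlogA1 : HasDerivAt (fun q : ℝ => Real.log (fcA γ (1 - q)))
      (((fcA γ (1 - q))⁻¹ * (-(1 + γ) - γ * Real.log (1 - q))) * (-1)) q := by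
    have inner : HasDerivAt (fun q : ℝ => Real.log (fcA γ q))
        ((fcA γ (1 - q))⁻¹ * (-(1 + γ) - γ * Real.log (1 - q))) (1 - q) :=
      (Real.hasDerivAt_log (fcA_pos hγ h1q (by linarith)).ne').comp (1 - q)
        (fcA_hasDerivAt γ h1q.ne')
    exact inner.comp q hone
  have := (((hlog1.const_mul γ).fun_sub (hlogq.const_mul γ)).fun_add hlogA).fun_sub hlogA1
  refine (this : HasDerivAt (fcG γ) _ q).congr_deriv ?_
  ring

lemma fcG_deriv_neg {γ q : ℝ} (hγ : 0 < γ) (h0 : 0 < q) (h1 : q < 1) :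
    γ * (-(1 - q)⁻¹) - γ * q⁻¹ + (fcA γ q)⁻¹ * (-(1 + γ) - γ * Real.log q)
        + (fcA γ (1 - q))⁻¹ * (-(1 + γ) - γ * Real.log (1 - q)) < 0 := by
  have h1q : (0:ℝ) < 1 - q := by linarith
  have hA := fcA_pos hγ h0 h1
  have hA1 := fcA_pos hγ h1q (by linarith : (1:ℝ) - q < 1)
  have k1 : (fcA γ q)⁻¹ * (-(1 + γ) - γ * Real.log q) < γ * q⁻¹ := by
    rw [inv_mul_lt_iff₀ hA]
    calc -(1 + γ) - γ * Real.log q = q⁻¹ * (q * (-(1 + γ) - γ * Real.log q)) := by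
          field_simp
      _ < q⁻¹ * (γ * fcA γ q) :=
          mul_lt_mul_of_pos_left (fc_key hγ h0 h1) (inv_pos.2 h0)
      _ = fcA γ q * (γ * q⁻¹) := by ring
  have k2 : (fcA γ (1 - q))⁻¹ * (-(1 + γ) - γ * Real.log (1 - q)) < γ * (1 - q)⁻¹ := by
    rw [inv_mul_lt_iff₀ hA1]
    calc -(1 + γ) - γ * Real.log (1 - q)
        = (1 - q)⁻¹ * ((1 - q) * (-(1 + γ) - γ * Real.log (1 - q))) := by field_simp
      _ < (1 - q)⁻¹ * (γ * fcA γ (1 - q)) :=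
          mul_lt_mul_of_pos_left (fc_key hγ h1q (by linarith)) (inv_pos.2 h1q)
      _ = fcA γ (1 - q) * (γ * (1 - q)⁻¹) := by ring
  linarith

lemma fcG_strictAnti (γ : ℝ) (hγ : 0 < γ) : StrictAntiOn (fcG γ) (Set.Ioo 0 1) := by
  apply strictAntiOn_of_deriv_neg (convex_Ioo 0 1)
  · intro x hx
    exact ((fcG_hasDerivAt hγ hx.1 hx.2).continuousAt).continuousWithinAt
  · intro x hx
    rw [interior_Ioo] at hx
    rw [(fcG_hasDerivAt hγ hx.1 hx.2).deriv]
    exact fcG_deriv_neg hγ hx.1 hx.2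

lemma focalCalib_eq {γ q : ℝ} (hγ : 0 < γ) (h0 : 0 < q) (h1 : q < 1) :
    focalCalib γ q = 1 / (1 + Real.exp (fcG γ q)) := by
  have h1q : (0:ℝ) < 1 - q := by linarith
  have hA := fcA_pos hγ h0 h1
  have hA1 := fcA_pos hγ h1q (by linarith : (1:ℝ) - q < 1)
  have hA1eq : fcA γ (1 - q) = q - γ * (1 - q) * Real.log (1 - q) := by
    unfold fcA; ring_nf
  rw [focalCalib, if_neg h0.ne', if_neg (by linarith : q ≠ 1)]
  congr 2
  rw [← hA1eq]
  have hdiv : (0:ℝ) < (1 - q) / q := div_pos h1q h0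
  rw [Real.rpow_def_of_pos hdiv, Real.log_div h1q.ne' h0.ne']
  rw [show (1 - q - γ * q * Real.log q) = fcA γ q from rfl]
  rw [show fcA γ q / fcA γ (1 - q) = Real.exp (Real.log (fcA γ q) - Real.log (fcA γ (1 - q))) by
    rw [Real.exp_sub, Real.exp_log hA, Real.exp_log hA1]]
  rw [← Real.exp_add]
  congr 1
  unfold fcG
  ring

lemma focalCalib_mem {γ q : ℝ} (hγ : 0 < γ) (h0 : 0 < q) (h1 : q < 1) :
    focalCalib γ q ∈ Set.Ioo (0:ℝ) 1 := by
  rw [focalCalib_eq hγ h0 h1]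
  have he : 0 < Real.exp (fcG γ q) := Real.exp_pos _
  constructor
  · positivity
  · rw [div_lt_one (by linarith)]; linarith

lemma focalCalib_zero (γ : ℝ) : focalCalib γ 0 = 0 := by simp [focalCalib]

lemma focalCalib_one (γ : ℝ) : focalCalib γ 1 = 1 := by norm_num [focalCalib]

lemma focalCalib_lt {γ x y : ℝ} (hγ : 0 < γ) (hx : x ∈ Set.Ioo (0:ℝ) 1)
    (hy : y ∈ Set.Ioo (0:ℝ) 1) (hxy : x < y) : focalCalib γ x < focalCalib γ y := by
  rw [focalCalib_eq hγ hx.1 hx.2, focalCalib_eq hγ hy.1 hy.2]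
  have hG : fcG γ y < fcG γ x := fcG_strictAnti γ hγ hx hy hxy
  have hE := Real.exp_lt_exp.2 hG
  exact div_lt_div_of_pos_left one_pos (by positivity) (by linarith)

lemma focalCalib_smono (γ : ℝ) (hγ : 0 < γ) : StrictMonoOn (focalCalib γ) (Set.Icc 0 1) := by
  intro x hx y hy hxy
  rcases eq_or_lt_of_le hx.1 with h0x | h0x
  · rw [← h0x, focalCalib_zero]
    have hy0 : 0 < y := lt_of_le_of_lt (le_of_eq h0x) hxy
    rcases eq_or_lt_of_le hy.2 with h1y | h1y
    · rw [h1y, focalCalib_one]; norm_num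
    · exact (focalCalib_mem hγ hy0 h1y).1
  · have hx1 : x < 1 := lt_of_lt_of_le hxy hy.2
    rcases eq_or_lt_of_le hy.2 with h1y | h1y
    · rw [h1y, focalCalib_one]; exact (focalCalib_mem hγ h0x hx1).2
    · exact focalCalib_lt hγ ⟨h0x, hx1⟩ ⟨lt_trans h0x hxy, h1y⟩ hxy

lemma fcG_symm (γ q : ℝ) : fcG γ (1 - q) = - fcG γ q := by
  unfold fcG
  rw [sub_sub_cancel]
  ring

lemma fcA_continuous (γ : ℝ) : Continuous (fcA γ) := by
  unfold fcA
  simp only [mul_assoc]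
  exact (continuous_const.sub continuous_id).sub (continuous_const.mul Real.continuous_mul_log)

lemma fcG_continuousOn (γ : ℝ) (hγ : 0 < γ) : ContinuousOn (fcG γ) (Set.Ioo 0 1) :=
  fun x hx => (fcG_hasDerivAt hγ hx.1 hx.2).continuousAt.continuousWithinAt

lemma fcG_tendsto_top (γ : ℝ) (hγ : 0 < γ) :
    Tendsto (fcG γ) (𝓝[>] (0:ℝ)) atTop := by
  have t1 : Tendsto (fun q : ℝ => γ * Real.log (1 - q)) (𝓝[>] (0:ℝ)) (𝓝 0) := by
    have c1 : ContinuousAt (fun q : ℝ => γ * Real.log (1 - q)) 0 := by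
      have hc : ContinuousAt (fun q : ℝ => (1:ℝ) - q) 0 := by fun_prop
      exact (ContinuousAt.comp (Real.continuousAt_log (by norm_num)) hc).const_mul γ
    have h2 : Tendsto (fun q : ℝ => γ * Real.log (1 - q)) (𝓝[>] (0:ℝ))
        (𝓝 (γ * Real.log (1 - 0))) := c1.tendsto.mono_left nhdsWithin_le_nhds
    simpa using h2
  have t2 : Tendsto (fun q : ℝ => -(γ * Real.log q)) (𝓝[>] (0:ℝ)) atTop := by
    have := Real.tendsto_log_nhdsGT_zero.const_mul_atBot hγ
    exact tendsto_neg_atBot_atTop.comp this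
  have t3 : Tendsto (fun q : ℝ => Real.log (fcA γ q)) (𝓝[>] (0:ℝ)) (𝓝 0) := by
    have hA0 : fcA γ 0 = 1 := by simp [fcA]
    have hlogc : ContinuousAt Real.log (fcA γ 0) := by
      rw [hA0]; exact Real.continuousAt_log one_ne_zero
    have c3 : ContinuousAt (fun q : ℝ => Real.log (fcA γ q)) 0 :=
      hlogc.comp (fcA_continuous γ).continuousAt
    have h2 : Tendsto (fun q : ℝ => Real.log (fcA γ q)) (𝓝[>] (0:ℝ))
        (𝓝 (Real.log (fcA γ 0))) := c3.tendsto.mono_left nhdsWithin_le_nhds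
    simpa [hA0] using h2
  have t4 : Tendsto (fun q : ℝ => -(Real.log (fcA γ (1 - q)))) (𝓝[>] (0:ℝ)) atTop := by
    have hmap : Tendsto (fun q : ℝ => fcA γ (1 - q)) (𝓝[>] (0:ℝ)) (𝓝[>] (0:ℝ)) := by
      apply tendsto_nhdsWithin_of_tendsto_nhds_of_eventually_within
      · have hA1 : fcA γ 1 = 0 := by simp [fcA]
        have hc : ContinuousAt (fun q : ℝ => fcA γ (1 - q)) 0 :=
          (fcA_continuous γ).continuousAt.comp (by fun_prop)
        have h2 : Tendsto (fun q : ℝ => fcA γ (1 - q)) (𝓝[>] (0:ℝ))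
            (𝓝 (fcA γ (1 - 0))) := hc.tendsto.mono_left nhdsWithin_le_nhds
        simpa [hA1] using h2
      · filter_upwards [Ioo_mem_nhdsGT_of_mem (Set.mem_Ico.2 ⟨le_refl (0:ℝ), one_pos⟩)] with q hq
        exact fcA_pos hγ (by linarith [hq.2] : (0:ℝ) < 1 - q) (by linarith [hq.1])
    have := Real.tendsto_log_nhdsGT_zero.comp hmap
    exact tendsto_neg_atBot_atTop.comp this
  have hsum : Tendsto
      (fun q : ℝ => γ * Real.log (1 - q) + -(γ * Real.log q) + Real.log (fcA γ q)
        + -(Real.log (fcA γ (1 - q)))) (𝓝[>] (0:ℝ)) atTop :=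
    (Tendsto.atTop_add_atTop ((t1.add_atTop t2).atTop_add t3) t4)
  exact hsum.congr (fun q => by unfold fcG; ring)

lemma fcG_tendsto_bot (γ : ℝ) (hγ : 0 < γ) :
    Tendsto (fcG γ) (𝓝[<] (1:ℝ)) atBot := by
  have hmap : Tendsto (fun q : ℝ => 1 - q) (𝓝[<] (1:ℝ)) (𝓝[>] (0:ℝ)) := by
    apply tendsto_nhdsWithin_of_tendsto_nhds_of_eventually_within
    · have hc : ContinuousAt (fun q : ℝ => (1:ℝ) - q) 1 := by fun_prop
      have h2 : Tendsto (fun q : ℝ => (1:ℝ) - q) (𝓝[<] (1:ℝ)) (𝓝 ((1:ℝ) - 1)) :=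
        hc.tendsto.mono_left nhdsWithin_le_nhds
      simpa using h2
    · filter_upwards [self_mem_nhdsWithin] with q hq
      simp only [Set.mem_Iio] at hq
      simp only [Set.mem_Ioi]
      linarith
  have h1 := (fcG_tendsto_top γ hγ).comp hmap
  have h2 : Tendsto (fun q : ℝ => -(fcG γ (1 - q))) (𝓝[<] (1:ℝ)) atBot :=
    tendsto_neg_atTop_atBot.comp h1
  apply h2.congr
  intro q
  rw [fcG_symm]
  ring

lemma focalCalib_le {γ a y : ℝ} (hγ : 0 < γ) (ha : a ∈ Set.Ioo (0:ℝ) 1)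
    (hy : y ∈ Set.Ioo (0:ℝ) 1) (h : Real.log ((1 - y) / y) ≤ fcG γ a) :
    focalCalib γ a ≤ y := by
  rw [focalCalib_eq hγ ha.1 ha.2]
  have hyy : (0:ℝ) < (1 - y) / y := div_pos (by linarith [hy.2]) hy.1
  have he : (1 - y) / y ≤ Real.exp (fcG γ a) := by
    calc (1 - y) / y = Real.exp (Real.log ((1 - y) / y)) := (Real.exp_log hyy).symm
      _ ≤ _ := Real.exp_le_exp.2 h
  rw [div_le_iff₀ (by positivity)]
  have key : y * ((1 - y) / y) = 1 - y := by
    rw [mul_comm, div_mul_cancel₀ _ (ne_of_gt hy.1)]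
  nlinarith [mul_le_mul_of_nonneg_left he hy.1.le]

lemma focalCalib_ge {γ b y : ℝ} (hγ : 0 < γ) (hb : b ∈ Set.Ioo (0:ℝ) 1)
    (hy : y ∈ Set.Ioo (0:ℝ) 1) (h : fcG γ b ≤ Real.log ((1 - y) / y)) :
    y ≤ focalCalib γ b := by
  rw [focalCalib_eq hγ hb.1 hb.2]
  have hyy : (0:ℝ) < (1 - y) / y := div_pos (by linarith [hy.2]) hy.1
  have he : Real.exp (fcG γ b) ≤ (1 - y) / y := by
    calc Real.exp (fcG γ b) ≤ Real.exp (Real.log ((1 - y) / y)) := Real.exp_le_exp.2 h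
      _ = (1 - y) / y := Real.exp_log hyy
  rw [le_div_iff₀ (by positivity)]
  have key : y * ((1 - y) / y) = 1 - y := by
    rw [mul_comm, div_mul_cancel₀ _ (ne_of_gt hy.1)]
  nlinarith [mul_le_mul_of_nonneg_left he hy.1.le]

lemma focalCalib_continuousOn (γ : ℝ) (hγ : 0 < γ) :
    ContinuousOn (focalCalib γ) (Set.Ioo 0 1) := by
  have h : ContinuousOn (fun q => 1 / (1 + Real.exp (fcG γ q))) (Set.Ioo (0:ℝ) 1) := by
    apply ContinuousOn.div continuousOn_const
    · exact continuousOn_const.add (Real.continuous_exp.comp_continuousOn (fcG_continuousOn γ hγ))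
    · intro x hx
      positivity
  exact h.congr (fun x hx => focalCalib_eq hγ hx.1 hx.2)

theorem focalCalib_strictMono_bijection (γ : ℝ) (hγ : 0 < γ) :
    StrictMonoOn (focalCalib γ) (Set.Icc (0:ℝ) 1) ∧
    Set.BijOn (focalCalib γ) (Set.Icc (0:ℝ) 1) (Set.Icc (0:ℝ) 1) := by
  have hsm := focalCalib_smono γ hγ
  refine ⟨hsm, ?_, hsm.injOn, ?_⟩
  · intro q hq
    rcases eq_or_lt_of_le hq.1 with h | h
    · rw [← h, focalCalib_zero]; exact ⟨le_refl 0, zero_le_one⟩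
    rcases eq_or_lt_of_le hq.2 with h1 | h1
    · rw [h1, focalCalib_one]; exact ⟨zero_le_one, le_refl 1⟩
    · exact Set.Ioo_subset_Icc_self (focalCalib_mem hγ h h1)
  · intro y hy
    rcases eq_or_lt_of_le hy.1 with h | h
    · exact ⟨0, ⟨le_refl 0, zero_le_one⟩, by rw [focalCalib_zero, h]⟩
    rcases eq_or_lt_of_le hy.2 with h1 | h1
    · exact ⟨1, ⟨zero_le_one, le_refl 1⟩, by rw [focalCalib_one, h1]⟩
    have hyI : y ∈ Set.Ioo (0:ℝ) 1 := ⟨h, h1⟩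
    set C := Real.log ((1 - y) / y) with hC
    obtain ⟨a, haI, haC⟩ : ∃ a, a ∈ Set.Ioo (0:ℝ) 1 ∧ C ≤ fcG γ a := by
      have h1' := (fcG_tendsto_top γ hγ).eventually_ge_atTop C
      have h2' : Set.Ioo (0:ℝ) 1 ∈ 𝓝[>] (0:ℝ) :=
        Ioo_mem_nhdsGT_of_mem (Set.mem_Ico.2 ⟨le_refl (0:ℝ), one_pos⟩)
      rcases (h1'.and (eventually_of_mem h2' (fun x hx => hx))).exists with ⟨a, h3, h4⟩
      exact ⟨a, h4, h3⟩
    obtain ⟨b, hbI, hbC⟩ : ∃ b, b ∈ Set.Ioo (0:ℝ) 1 ∧ fcG γ b ≤ C := by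
      have h1' := (fcG_tendsto_bot γ hγ).eventually_le_atBot C
      have h2' : Set.Ioo (0:ℝ) 1 ∈ 𝓝[<] (1:ℝ) :=
        Ioo_mem_nhdsLT_of_mem (Set.mem_Ioc.2 ⟨zero_lt_one, le_refl (1:ℝ)⟩)
      rcases (h1'.and (eventually_of_mem h2' (fun x hx => hx))).exists with ⟨b, h3, h4⟩
      exact ⟨b, h4, h3⟩
    have hfa : focalCalib γ a ≤ y := focalCalib_le hγ haI hyI haC
    have hfb : y ≤ focalCalib γ b := focalCalib_ge hγ hbI hyI hbC
    have hab : a ≤ b := by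
      by_contra hab
      push_neg at hab
      have := hsm (Set.Ioo_subset_Icc_self hbI) (Set.Ioo_subset_Icc_self haI) hab
      linarith
    have hcont : ContinuousOn (focalCalib γ) (Set.Icc a b) :=
      (focalCalib_continuousOn γ hγ).mono (Set.Icc_subset_Ioo haI.1 hbI.2)
    have hIVT := intermediate_value_Icc hab hcont
    rcases hIVT ⟨hfa, hfb⟩ with ⟨x, hx, hfx⟩
    exact ⟨x, Set.Icc_subset_Icc haI.1.le hbI.2.le hx, hfx⟩
end

section
/- For every γ > 0, the function f_γ(s) = (γ·e^s·log(1+e^{-s}) + 1)/(1 + γ·e^{-s}·log(1+e^s)) is monotonically increasing on ℝ, satisfies f_γ(0) = 1, and hence f_γ(s) > 1 for s > 0 and f_γ(s) < 1 for s < 0. -/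
open Real

/-- The ratio appearing in the logit-form focal calibration. -/
noncomputable def fγ (γ : ℝ) (s : ℝ) : ℝ :=
  (γ * Real.exp s * Real.log (1 + Real.exp (-s)) + 1) /
    (1 + γ * Real.exp (-s) * Real.log (1 + Real.exp s))

lemma aux_key {u v : ℝ} (hv : 0 < v) (huv : v < u) :
    v * Real.log (1 + u) < u * Real.log (1 + v) := by
  have hu : 0 < u := hv.trans huv
  have h1 : (1:ℝ) ∈ Set.Ioi (0:ℝ) := by norm_num
  have h2 : (1+u) ∈ Set.Ioi (0:ℝ) := by simp; linarith
  have hne : (1:ℝ) ≠ 1 + u := by linarith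
  have ha : 0 < 1 - v/u := by
    have : v/u < 1 := (div_lt_one hu).mpr huv
    linarith
  have hb : 0 < v/u := div_pos hv hu
  have hab : (1 - v/u) + v/u = 1 := by ring
  have hcc := strictConcaveOn_log_Ioi.2 h1 h2 hne ha hb hab
  have hx : (1 - v/u) • (1:ℝ) + (v/u) • (1+u) = 1 + v := by
    field_simp
    ring_nf; rw [mul_comm u v, mul_assoc, mul_inv_cancel₀ hu.ne']; ring
  rw [hx, Real.log_one, smul_eq_mul, smul_eq_mul, mul_zero, zero_add,
    div_mul_eq_mul_div, div_lt_iff₀ hu] at hcc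
  linarith [hcc, mul_comm (Real.log (1+v)) u]

lemma A_strictMono : StrictMono (fun s => Real.exp s * Real.log (1 + Real.exp (-s))) := by
  intro s t hst
  have hv : 0 < Real.exp (-t) := Real.exp_pos _
  have huv : Real.exp (-t) < Real.exp (-s) := Real.exp_lt_exp.mpr (by linarith)
  have hu : 0 < Real.exp (-s) := Real.exp_pos _
  have key := aux_key hv huv
  simp only
  rw [show Real.exp s = (Real.exp (-s))⁻¹ by rw [← Real.exp_neg, neg_neg],
    show Real.exp t = (Real.exp (-t))⁻¹ by rw [← Real.exp_neg, neg_neg],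
    inv_mul_eq_div, inv_mul_eq_div, div_lt_div_iff₀ hu hv]
  nlinarith [key]

theorem fγ_monotone_and_one_at_zero (γ : ℝ) (hγ : 0 < γ) :
    Monotone (fγ γ) ∧ fγ γ 0 = 1 ∧
    (∀ s : ℝ, 0 < s → 1 < fγ γ s) ∧ (∀ s : ℝ, s < 0 → fγ γ s < 1) := by
  set A : ℝ → ℝ := fun s => Real.exp s * Real.log (1 + Real.exp (-s)) with hA
  have hApos : ∀ s, 0 < A s := by
    intro s
    exact mul_pos (Real.exp_pos _) (Real.log_pos (by linarith [Real.exp_pos (-s)]))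
  have hfγ : ∀ s, fγ γ s = (γ * A s + 1) / (1 + γ * A (-s)) := by
    intro s
    simp only [fγ, hA, neg_neg]
    ring_nf
  have hDpos : ∀ s : ℝ, 0 < 1 + γ * A (-s) := by
    intro s
    have := hApos (-s)
    nlinarith
  have hmono : Monotone (fγ γ) := by
    intro s t hst
    rw [hfγ, hfγ]
    have h1 : A s ≤ A t := A_strictMono.monotone hst
    have h2 : A (-t) ≤ A (-s) := A_strictMono.monotone (by linarith)
    have h3 : 0 ≤ γ * A t + 1 := by nlinarith [hApos t]
    exact div_le_div₀ h3 (by nlinarith) (hDpos t) (by nlinarith)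
  refine ⟨hmono, ?_, ?_, ?_⟩
  · have hD0 : (0:ℝ) < 1 + γ * A 0 := by have := hDpos 0; rwa [neg_zero] at this
    rw [hfγ, neg_zero, div_eq_one_iff_eq (ne_of_gt hD0)]
    ring
  · intro s hs
    rw [hfγ, lt_div_iff₀ (hDpos s)]
    have := A_strictMono (show -s < s by linarith)
    nlinarith
  · intro s hs
    rw [hfγ, div_lt_one (hDpos s)]
    have := A_strictMono (show s < -s by linarith)
    nlinarith
end

section
/- For every γ > 0 and every s ∈ ℝ, the derivative of f_γ(s) = (γ·e^s·log(1+e^{-s}) + 1)/(1 + γ·e^{-s}·log(1+e^s)) with respect to s is strictly less than (γ+1)/2. -/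
open Real

/-- Key algebraic inequality: with `u*v = 1`, `0 < a < v`, `0 < b < u`. -/
lemma key_ineq_fγ (γ u v a b : ℝ) (hγ : 0 < γ) (hu : 0 < u) (hv : 0 < v)
    (huv : u * v = 1) (ha : 0 < a) (hav : a < v) (hb : 0 < b) (hbu : b < u) :
    γ * (u * a + v * b) + 2 * γ ^ 2 * (a * b) - γ
      < (γ + 1) / 2 * (1 + γ * (v * b)) ^ 2 := by
  have hx : u * a < 1 := by
    calc u * a < u * v := by nlinarith
    _ = 1 := huv
  have ht : v * b < 1 := by
    calc v * b < v * u := by nlinarith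
    _ = 1 := by linarith [huv, mul_comm u v]
  have hab : a * b < v * b := by nlinarith
  nlinarith [sq_nonneg ((γ + 1) * (v * b) - 1), mul_pos hγ hγ,
    mul_pos (mul_pos hγ hγ) hγ, mul_pos hu ha, mul_pos hv hb,
    mul_pos hγ (mul_pos hv hb),
    mul_nonneg (mul_nonneg hγ.le hγ.le) (sq_nonneg ((γ + 1) * (v * b) - 1)),
    mul_pos (mul_pos hγ hγ) (sub_pos.2 hab),
    mul_pos hγ (sub_pos.2 hx)]

theorem fγ_deriv_lt (γ : ℝ) (hγ : 0 < γ) (s : ℝ) :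
    deriv (fγ γ) s < (γ + 1) / 2 := by
  have hu : 0 < Real.exp s := Real.exp_pos s
  have hv : 0 < Real.exp (-s) := Real.exp_pos (-s)
  have h1v : (0:ℝ) < 1 + Real.exp (-s) := by linarith
  have h1u : (0:ℝ) < 1 + Real.exp s := by linarith
  have hb : 0 < Real.log (1 + Real.exp s) := Real.log_pos (by linarith)
  have ha : 0 < Real.log (1 + Real.exp (-s)) := Real.log_pos (by linarith)
  have hBpos : (0:ℝ) < 1 + γ * Real.exp (-s) * Real.log (1 + Real.exp s) := by positivity
  have h1 : HasDerivAt (fun x : ℝ => Real.exp (-x)) (-Real.exp (-s)) s := by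
    simpa [Function.comp_def] using (Real.hasDerivAt_exp (-s)).comp s ((hasDerivAt_id s).neg)
  have h2 : HasDerivAt (fun x : ℝ => 1 + Real.exp (-x)) (-Real.exp (-s)) s :=
    h1.const_add 1
  have h3 : HasDerivAt (fun x : ℝ => Real.log (1 + Real.exp (-x)))
      (-Real.exp (-s) / (1 + Real.exp (-s))) s := h2.log (ne_of_gt h1v)
  have h4 : HasDerivAt (fun x : ℝ => γ * Real.exp x) (γ * Real.exp s) s :=
    (Real.hasDerivAt_exp s).const_mul γ
  have hA : HasDerivAt (fun x : ℝ => γ * Real.exp x * Real.log (1 + Real.exp (-x)) + 1)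
      (γ * Real.exp s * (-Real.exp (-s) / (1 + Real.exp (-s)))
        + γ * Real.exp s * Real.log (1 + Real.exp (-s))) s := by
    have := (h4.mul h3).add_const 1
    exact this.congr_deriv (by ring)
  have h6 : HasDerivAt (fun x : ℝ => γ * Real.exp (-x)) (γ * -Real.exp (-s)) s :=
    h1.const_mul γ
  have h7 : HasDerivAt (fun x : ℝ => Real.log (1 + Real.exp x))
      (Real.exp s / (1 + Real.exp s)) s :=
    ((Real.hasDerivAt_exp s).const_add 1).log (ne_of_gt h1u)
  have hB : HasDerivAt (fun x : ℝ => 1 + γ * Real.exp (-x) * Real.log (1 + Real.exp x))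
      (γ * -Real.exp (-s) * Real.log (1 + Real.exp s)
        + γ * Real.exp (-s) * (Real.exp s / (1 + Real.exp s))) s :=
    (h6.mul h7).const_add 1
  have hd := hA.div hB (ne_of_gt hBpos)
  have hder : deriv (fγ γ) s = _ := hd.deriv
  rw [hder]
  set u := Real.exp s with hu'
  set v := Real.exp (-s) with hv'
  set a := Real.log (1 + v) with ha'
  set b := Real.log (1 + u) with hb'
  have huv : u * v = 1 := by
    rw [hu', hv', ← Real.exp_add]; simp
  have hav : a < v := by
    calc a < Real.log (Real.exp v) := by
          apply Real.log_lt_log h1v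
          have := Real.add_one_lt_exp (ne_of_gt hv)
          linarith
    _ = v := Real.log_exp v
  have hbu : b < u := by
    calc b < Real.log (Real.exp u) := by
          apply Real.log_lt_log h1u
          have := Real.add_one_lt_exp (ne_of_gt hu)
          linarith
    _ = u := Real.log_exp u
  have hveq : v = 1 / u := eq_one_div_of_mul_eq_one_left (by linarith [mul_comm u v])
  rw [div_lt_iff₀ (by positivity)]
  have hE : (γ * u * (-v / (1 + v)) + γ * u * a) * (1 + γ * v * b)
      - (γ * u * a + 1) * (γ * -v * b + γ * v * (u / (1 + u)))
      = γ * (u * a + v * b) + 2 * γ ^ 2 * (a * b) - γ - γ ^ 2 * (b + u * a) / (1 + u) := by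
    rw [hveq]
    field_simp
    ring
  rw [hE]
  have hpos : 0 < γ ^ 2 * (b + u * a) / (1 + u) := by positivity
  have hkey := key_ineq_fγ γ u v a b hγ hu hv huv ha hav hb hbu
  linarith
end

section
/- For γ > 0 and a ground-truth probability vector p ∈ Δⁿ with all entries positive, the conditional risk q ↦ Σᵢ pᵢ·(-(1-qᵢ)^γ·log(qᵢ)) over the simplex Δⁿ has a critical point (in the sense of Lagrange multipliers) at any q ∈ Δⁿ satisfying p_j = f(q_j)/Σₖ f(qₖ) for all j, where f(q) = 1/((1-q)^γ·(γ·log(q)/(1-q) − 1/q)). Equivalently, at a critical point the Lagrange conditions p_j·L'(q_j) = λ for all j, with Σⱼ q_j = 1, imply p_j equals the j-th coordinate of the focal calibration map applied to q. -/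
open Real

/-- The reciprocal of the focal loss derivative appearing in the multiclass
focal calibration map. -/
noncomputable def focalRecip (γ : ℝ) (q : ℝ) : ℝ :=
  1 / ((1 - q) ^ γ * (γ * Real.log q / (1 - q) - 1 / q))

/-- At a critical point of the conditional risk of the focal loss over the simplex
(in the sense of Lagrange multipliers), the ground-truth probabilities coincide
with the focal calibration map applied to the prediction. -/
theorem focal_risk_critical_point_is_calibration (γ : ℝ) (hγ : 0 < γ)
    (n : ℕ) (p q : Fin n → ℝ)
    (hp : ∀ i, 0 < p i) (hpsum : ∑ i, p i = 1)
    (hq : ∀ i, q i ∈ Set.Ioo (0:ℝ) 1) (hqsum : ∑ i, q i = 1)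
    (lam : ℝ)
    (hcrit : ∀ j, p j * ((1 - q j) ^ γ * (γ * Real.log (q j) / (1 - q j) - 1 / q j)) = lam) :
    ∀ j, p j = focalRecip γ (q j) / ∑ k, focalRecip γ (q k) := by
  set D : Fin n → ℝ := fun j => (1 - q j) ^ γ * (γ * Real.log (q j) / (1 - q j) - 1 / q j)
    with hD
  have hDneg : ∀ j, D j < 0 := by
    intro j
    obtain ⟨h0, h1⟩ := hq j
    have hq1 : 0 < 1 - q j := by linarith
    have hpow : 0 < (1 - q j) ^ γ := Real.rpow_pos_of_pos hq1 γ
    have hlog : Real.log (q j) < 0 := Real.log_neg h0 h1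
    have h2 : γ * Real.log (q j) / (1 - q j) < 0 :=
      div_neg_of_neg_of_pos (mul_neg_of_pos_of_neg hγ hlog) hq1
    have h3 : 0 < 1 / q j := by positivity
    have : γ * Real.log (q j) / (1 - q j) - 1 / q j < 0 := by linarith
    exact mul_neg_of_pos_of_neg hpow this
  intro j
  have hlam : lam < 0 := by
    have h := hcrit j
    have := mul_neg_of_pos_of_neg (hp j) (hDneg j)
    rw [show p j * ((1 - q j) ^ γ * (γ * Real.log (q j) / (1 - q j) - 1 / q j)) = p j * D j from rfl] at h; linarith
  have hlamne : lam ≠ 0 := ne_of_lt hlam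
  have hpk : ∀ k, p k = lam * focalRecip γ (q k) := by
    intro k
    have h := hcrit k
    have hDk := (hDneg k).ne
    rw [focalRecip]
    field_simp
    rw [eq_div_iff (show ((1 - q k) ^ γ * (γ * Real.log (q k) / (1 - q k) - 1 / q k)) ≠ 0 from hDk)]
    linarith [h]
  have hsum : ∑ k, focalRecip γ (q k) = 1 / lam := by
    have : ∑ k, p k = ∑ k, lam * focalRecip γ (q k) :=
      Finset.sum_congr rfl fun k _ => hpk k
    rw [hpsum, ← Finset.mul_sum] at this
    field_simp
    linarith
  rw [hsum, hpk j]
  field_simp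
end
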